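/- arXiv:2407.03269 — 2 statements merged into one kernel-verified Lean document; each statement's English description precedes it below -/
import Mathlib

section
/- Let α ∈ R^n ∖ Q^n, κ = ρ/μ with ρ, μ positive coprime integers. Suppose there is a sequence (η_ℓ, ξ_ℓ) ∈ Z^n × N with max_{j} |η_{jℓ}/ξ_ℓ^κ − α_j| < (|η_ℓ| + ξ_ℓ)^{−ρℓ} for all ℓ (with ξ_ℓ → ∞). Then there exists C > 0 such that max_j |(η_{jℓ})^μ / ξ_ℓ^ρ − α_j^μ| ≤ C (ξ_ℓ^ρ)^{−ℓ} for all large ℓ; in particular α satisfies the (SDA)_μ condition. -/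
open Filter

/-- The simultaneous Diophantine approximation condition `(SDA)_μ`. -/
def SDA (n μ : ℕ) (α : Fin n → ℝ) : Prop :=
  ∃ C > (0 : ℝ), ∃ p : ℕ → Fin n → ℤ, ∃ q : ℕ → ℕ, (∀ ℓ, 0 < q ℓ) ∧
    ∀ ℓ, ∀ j, |α j ^ μ - (p ℓ j : ℝ) ^ μ / (q ℓ : ℝ)| < C / (q ℓ : ℝ) ^ ℓ

lemma pow_sub_pow_abs_le (x y B : ℝ) (m : ℕ) (hx : |x| ≤ B) (hy : |y| ≤ B) :
    |x ^ m - y ^ m| ≤ m * B ^ (m - 1) * |x - y| := by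
  have hB : 0 ≤ B := le_trans (abs_nonneg x) hx
  rw [← geom_sum₂_mul x y m, abs_mul]
  have h1 : |∑ i ∈ Finset.range m, x ^ i * y ^ (m - 1 - i)| ≤ m * B ^ (m - 1) := by
    calc |∑ i ∈ Finset.range m, x ^ i * y ^ (m - 1 - i)|
        ≤ ∑ i ∈ Finset.range m, |x ^ i * y ^ (m - 1 - i)| := Finset.abs_sum_le_sum_abs _ _
      _ ≤ ∑ i ∈ Finset.range m, B ^ (m - 1) := by
          apply Finset.sum_le_sum
          intro i hi
          rw [Finset.mem_range] at hi
          rw [abs_mul, abs_pow, abs_pow]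
          calc |x| ^ i * |y| ^ (m - 1 - i) ≤ B ^ i * B ^ (m - 1 - i) := by
                exact mul_le_mul (pow_le_pow_left₀ (abs_nonneg x) hx i)
                  (pow_le_pow_left₀ (abs_nonneg y) hy _) (pow_nonneg (abs_nonneg y) _)
                  (pow_nonneg hB i)
            _ = B ^ (m - 1) := by rw [← pow_add]; congr 1; omega
      _ = m * B ^ (m - 1) := by simp [mul_comm]
  exact mul_le_mul_of_nonneg_right h1 (abs_nonneg _)

/-- if `α ∈ ℝ^n∖ℚ^n`, `κ = ρ/μ` with `ρ, μ` coprime positive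
integers, and a sequence `(η_ℓ, ξ_ℓ)` satisfies
`max_j |η_{jℓ}/ξ_ℓ^κ − α_j| < (|η_ℓ|+ξ_ℓ)^{−ρℓ}`, then for some `C > 0` and
all large `ℓ`, `max_j |η_{jℓ}^μ/ξ_ℓ^ρ − α_j^μ| ≤ C (ξ_ℓ^ρ)^{−ℓ}`; in
particular `α` satisfies `(SDA)_μ`. -/
theorem stmt6 (n ρ μ : ℕ) (hρ : 0 < ρ) (hμ : 0 < μ) (hcop : Nat.Coprime ρ μ)
    (α : Fin n → ℝ) (hirr : ∃ j, Irrational (α j))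
    (η : ℕ → Fin n → ℤ) (ξ : ℕ → ℕ) (hξpos : ∀ ℓ, 0 < ξ ℓ)
    (hξtop : Tendsto (fun ℓ => (ξ ℓ : ℝ)) atTop atTop)
    (happrox : ∀ ℓ, ∀ j,
      |(η ℓ j : ℝ) / (ξ ℓ : ℝ) ^ ((ρ : ℝ) / (μ : ℝ)) - α j|
        < (((∑ i, |(η ℓ i : ℝ)|) + (ξ ℓ : ℝ)) ^ (ρ * ℓ))⁻¹) :
    (∃ C > (0 : ℝ), ∃ L : ℕ, ∀ ℓ ≥ L, ∀ j,
      |(η ℓ j : ℝ) ^ μ / (ξ ℓ : ℝ) ^ ρ - α j ^ μ| ≤ C / ((ξ ℓ : ℝ) ^ ρ) ^ ℓ) ∧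
    SDA n μ α := by
  set B : ℝ := 1 + ∑ i, |α i| with hBdef
  have hsum : (0:ℝ) ≤ ∑ i, |α i| := Finset.sum_nonneg fun i _ => abs_nonneg _
  have hB1 : (1:ℝ) ≤ B := by simp [hBdef]; linarith
  have hB0 : (0:ℝ) < B := lt_of_lt_of_le one_pos hB1
  set C0 : ℝ := μ * B ^ (μ - 1) with hC0def
  have hC0pos : 0 < C0 := by
    apply mul_pos (by exact_mod_cast hμ) (pow_pos hB0 _)
  have key : ∀ ℓ, ∀ j,
      |(η ℓ j : ℝ) ^ μ / (ξ ℓ : ℝ) ^ ρ - α j ^ μ| ≤ C0 / ((ξ ℓ : ℝ) ^ ρ) ^ ℓ := by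
    intro ℓ j
    have hx1 : (1:ℝ) ≤ (ξ ℓ : ℝ) := by exact_mod_cast hξpos ℓ
    have hx0 : (0:ℝ) ≤ (ξ ℓ : ℝ) := by linarith
    set β : ℝ := (η ℓ j : ℝ) / (ξ ℓ : ℝ) ^ ((ρ : ℝ) / (μ : ℝ)) with hβdef
    have hμR : ((μ : ℝ)) ≠ 0 := by exact_mod_cast hμ.ne'
    have hβpow : β ^ μ = (η ℓ j : ℝ) ^ μ / (ξ ℓ : ℝ) ^ ρ := by
      rw [hβdef, div_pow]
      congr 1
      rw [← Real.rpow_natCast ((ξ ℓ : ℝ) ^ ((ρ : ℝ) / (μ : ℝ))) μ,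
        ← Real.rpow_mul hx0, div_mul_cancel₀ _ hμR, Real.rpow_natCast]
    set S : ℝ := (∑ i, |(η ℓ i : ℝ)|) + (ξ ℓ : ℝ) with hSdef
    have hηsum : (0:ℝ) ≤ ∑ i, |(η ℓ i : ℝ)| := Finset.sum_nonneg fun i _ => abs_nonneg _
    have hS1 : (1:ℝ) ≤ S := by simp only [hSdef]; linarith
    have hSpow1 : (1:ℝ) ≤ S ^ (ρ * ℓ) := one_le_pow₀ hS1
    have h1 : |β - α j| < (S ^ (ρ * ℓ))⁻¹ := happrox ℓ j
    have h2 : (S ^ (ρ * ℓ))⁻¹ ≤ 1 := inv_le_one_of_one_le₀ hSpow1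
    have hαB' : |α j| + 1 ≤ B := by
      have : |α j| ≤ ∑ i, |α i| :=
        Finset.single_le_sum (fun i _ => abs_nonneg (α i)) (Finset.mem_univ j)
      simp only [hBdef]; linarith
    have hαB : |α j| ≤ B := by linarith
    have hβB : |β| ≤ B := by
      have : |β| ≤ |α j| + |β - α j| := by
        calc |β| = |(β - α j) + α j| := by ring_nf
          _ ≤ |β - α j| + |α j| := abs_add_le _ _
          _ = |α j| + |β - α j| := by ring
      linarith [h1.le.trans h2]
    have hmain : |β ^ μ - α j ^ μ| ≤ C0 * (S ^ (ρ * ℓ))⁻¹ := by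
      calc |β ^ μ - α j ^ μ| ≤ μ * B ^ (μ - 1) * |β - α j| :=
            pow_sub_pow_abs_le β (α j) B μ hβB hαB
        _ ≤ C0 * (S ^ (ρ * ℓ))⁻¹ := by
            rw [hC0def]
            exact mul_le_mul_of_nonneg_left h1.le hC0pos.le
    have hden : ((ξ ℓ : ℝ) ^ ρ) ^ ℓ ≤ S ^ (ρ * ℓ) := by
      rw [← pow_mul]
      apply pow_le_pow_left₀ hx0
      simp only [hSdef]; linarith
    have hdenpos : (0:ℝ) < ((ξ ℓ : ℝ) ^ ρ) ^ ℓ := pow_pos (pow_pos (by linarith) _) _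
    calc |(η ℓ j : ℝ) ^ μ / (ξ ℓ : ℝ) ^ ρ - α j ^ μ| = |β ^ μ - α j ^ μ| := by rw [hβpow]
      _ ≤ C0 * (S ^ (ρ * ℓ))⁻¹ := hmain
      _ ≤ C0 * (((ξ ℓ : ℝ) ^ ρ) ^ ℓ)⁻¹ := by
          apply mul_le_mul_of_nonneg_left _ hC0pos.le
          exact inv_anti₀ hdenpos hden
      _ = C0 / ((ξ ℓ : ℝ) ^ ρ) ^ ℓ := by rw [div_eq_mul_inv]
  constructor
  · exact ⟨C0, hC0pos, 0, fun ℓ _ j => key ℓ j⟩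
  · refine ⟨C0 + 1, by linarith, η, fun ℓ => ξ ℓ ^ ρ, fun ℓ => pow_pos (hξpos ℓ) ρ, ?_⟩
    intro ℓ j
    have hdenpos : (0:ℝ) < ((ξ ℓ : ℝ) ^ ρ) ^ ℓ := by
      have : (0:ℝ) < (ξ ℓ : ℝ) := by exact_mod_cast hξpos ℓ
      positivity
    have hcast : ((ξ ℓ ^ ρ : ℕ) : ℝ) = (ξ ℓ : ℝ) ^ ρ := by push_cast; ring
    rw [hcast, abs_sub_comm]
    calc |(η ℓ j : ℝ) ^ μ / (ξ ℓ : ℝ) ^ ρ - α j ^ μ| ≤ C0 / ((ξ ℓ : ℝ) ^ ρ) ^ ℓ := key ℓ j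
      _ < (C0 + 1) / ((ξ ℓ : ℝ) ^ ρ) ^ ℓ := by
          exact (div_lt_div_iff_of_pos_right hdenpos).mpr (by linarith)
end

section
/- Suppose the symbol of L^p satisfies: there exist C, λ > 0 with max_{j=1,…,n}|η_j + p_j(ξ)| ≥ C(|(η,ξ)|)^{−λ} whenever this max is nonzero. If (f̂(η,ξ)) is a rapidly decreasing family of (p+1)-covectors indexed by (η,ξ) ∈ Z^{n+N} satisfying L̂(η,ξ) ∧ f̂(η,ξ) = 0, where L̂(η,ξ) = i Σ_j (η_j + p_j(ξ)) dt_j, then for each (η,ξ) with L̂(η,ξ) ≠ 0 the covector û(η,ξ) = (1/i) Σ_{|K|=p+1, μ∈K} (-1)^{sign(μ,K∖μ)} (η_μ + p_μ(ξ))^{-1} f̂_K(η,ξ) dt_{K∖{μ}} (with μ chosen so |η_μ + p_μ(ξ)| is the maximum) satisfies L̂(η,ξ) ∧ û(η,ξ) = f̂(η,ξ) and the family (û(η,ξ)) is rapidly decreasing. -/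
/-! Contracting `L̂ ∧ f̂ = 0` with the dual vector `dt_μ*` gives `L̂ ∧ (dt_μ* ⌋ f̂) = L̂_μ f̂`,
because contraction is an antiderivation; hence `û = L̂_μ⁻¹ (dt_μ* ⌋ f̂)` solves `L̂ ∧ û = f̂`, and
its coefficients are the displayed ones. As `|L̂_μ|` is the largest coefficient of `L̂`, the
Diophantine condition gives `|L̂_μ|⁻¹ ≤ C⁻¹ |(η,ξ)|^λ`, a polynomial loss absorbed by the rapid
decay of `f̂`. -/

open Finset

/-- The basis covector `dt_j` in the exterior algebra of `ℂ^n`. -/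
noncomputable def dt (n : ℕ) (j : Fin n) : ExteriorAlgebra ℂ (Fin n → ℂ) :=
  ExteriorAlgebra.ι ℂ (Pi.single j (1 : ℂ))

/-- The basis wedge `dt_K` over an increasingly sorted multi-index `K`. -/
noncomputable def dtW (n : ℕ) (K : Finset (Fin n)) : ExteriorAlgebra ℂ (Fin n → ℂ) :=
  ((K.sort (· ≤ ·)).map (dt n)).prod

theorem ExteriorAlgebra.ι_mul_smul_contractLeft_of_ι_mul_eq_zero {K M : Type*} [Field K]
    [AddCommGroup M] [Module K M] (d : Module.Dual K M) {v : M} (hv : d v ≠ 0)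
    {x : ExteriorAlgebra K M} (hx : ι K v * x = 0) :
    ι K v * ((d v)⁻¹ • CliffordAlgebra.contractLeft d x) = x := by
  have h := congrArg (CliffordAlgebra.contractLeft d) hx
  rw [map_zero, CliffordAlgebra.contractLeft_ι_mul, sub_eq_zero] at h
  rw [mul_smul_comm, ← h, smul_smul, inv_mul_cancel₀ hv, one_smul]

theorem sum_smul_dt {n : ℕ} (c : Fin n → ℂ) :
    ∑ j, c j • dt n j = ExteriorAlgebra.ι ℂ c := by
  simp only [dt, ← map_smul, ← map_sum, ← Pi.single_smul', smul_eq_mul, mul_one,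
    univ_sum_single]

theorem dtW_insert_of_lt {n : ℕ} {a : Fin n} {s : Finset (Fin n)} (ha : ∀ x ∈ s, a < x) :
    dtW n (insert a s) = dt n a * dtW n s := by
  rw [dtW, sort_insert _ (fun x hx => (ha x hx).le) (fun h => lt_irrefl a (ha a h)),
    List.map_cons, List.prod_cons, dtW]

theorem contractLeft_proj_dtW {n : ℕ} (μ : Fin n) (s : Finset (Fin n)) :
    CliffordAlgebra.contractLeft (LinearMap.proj μ : Module.Dual ℂ (Fin n → ℂ)) (dtW n s) =
      if μ ∈ s then ((-1 : ℂ) ^ #(s.filter (· < μ))) • dtW n (s.erase μ) else 0 := by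
  induction s using induction_on_min with
  | empty => simp [dtW]
  | insert a s ha ih =>
    have has : a ∉ s := fun h => lt_irrefl a (ha a h)
    rw [dtW_insert_of_lt ha, dt, CliffordAlgebra.contractLeft_ι_mul, ← dt, ih]
    obtain rfl | haμ := eq_or_ne a μ
    · have hlt : s.filter (· < a) = ∅ :=
        filter_eq_empty_iff.mpr fun x hx => (ha x hx).not_gt
      simp [has, filter_insert, hlt]
    · have hμa : μ ≠ a := haμ.symm
      simp only [LinearMap.proj_apply, Pi.single_eq_of_ne hμa, zero_smul, zero_sub,
        mem_insert, hμa, false_or]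
      split_ifs with hμs
      · have hlt : a < μ := ha μ hμs
        rw [erase_insert_of_ne haμ, dtW_insert_of_lt fun x hx => ha x (mem_of_mem_erase hx),
          filter_insert, if_pos hlt, card_insert_of_notMem (by simp [has]), pow_succ]
        simp
      · simp

theorem contractLeft_proj_sum_dtW {n p : ℕ} (μ : Fin n) (g : Finset (Fin n) → ℂ) :
    CliffordAlgebra.contractLeft (LinearMap.proj μ : Module.Dual ℂ (Fin n → ℂ))
        (∑ K ∈ univ.filter (fun K : Finset (Fin n) => K.card = p + 1), g K • dtW n K) =
      ∑ J ∈ univ.filter (fun J : Finset (Fin n) => J.card = p),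
        (if μ ∈ J then 0 else (-1 : ℂ) ^ #(J.filter (· < μ)) * g (insert μ J)) • dtW n J := by
  simp only [map_sum, map_smul, contractLeft_proj_dtW, smul_ite, smul_zero, ite_smul, zero_smul,
    smul_smul]
  rw [← sum_filter, sum_ite, sum_const_zero, zero_add]
  refine sum_nbij' (erase · μ) (insert μ) ?_ ?_ ?_ ?_ ?_
  all_goals intro K hK; simp only [mem_filter, mem_univ, true_and] at hK ⊢
  · exact ⟨by rw [card_erase_of_mem hK.2, hK.1, Nat.add_sub_cancel], notMem_erase μ K⟩
  · exact ⟨by rw [card_insert_of_notMem hK.2, hK.1], mem_insert_self μ K⟩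
  · exact insert_erase hK.2
  · exact erase_insert hK.2
  · have hμ : μ ∉ K.filter (· < μ) := by simp
    rw [insert_erase hK.2, filter_erase, erase_eq_of_notMem hμ, mul_comm]

theorem ι_mul_sum_dtW_eq_of_ι_mul_eq_zero {n p : ℕ} {v : Fin n → ℂ} {μ : Fin n} (hv : v μ ≠ 0)
    {g : Finset (Fin n) → ℂ}
    (hg : ExteriorAlgebra.ι ℂ v *
      ∑ K ∈ univ.filter (fun K : Finset (Fin n) => K.card = p + 1), g K • dtW n K = 0) :
    ExteriorAlgebra.ι ℂ v *
        ∑ J ∈ univ.filter (fun J : Finset (Fin n) => J.card = p),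
          (if μ ∈ J then 0 else (v μ)⁻¹ * (-1 : ℂ) ^ #(J.filter (· < μ)) * g (insert μ J)) •
            dtW n J =
      ∑ K ∈ univ.filter (fun K : Finset (Fin n) => K.card = p + 1), g K • dtW n K := by
  convert ExteriorAlgebra.ι_mul_smul_contractLeft_of_ι_mul_eq_zero (LinearMap.proj μ) hv hg
    using 2
  rw [contractLeft_proj_sum_dtW, smul_sum]
  refine sum_congr rfl fun J _ => ?_
  rw [smul_smul, mul_ite, mul_zero, mul_assoc]
  rfl

theorem apply_ne_zero_of_forall_norm_le {ι E : Type*} [NormedAddCommGroup E] {a : ι → E}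
    {μ : ι} (hμ : ∀ j, ‖a j‖ ≤ ‖a μ‖) (ha : a ≠ 0) : a μ ≠ 0 := fun h0 =>
  ha (funext fun j => norm_le_zero_iff.mp (by simpa [h0] using hμ j))

theorem inv_norm_le_of_exists_norm_ge {ι E : Type*} [NormedAddCommGroup E] {a : ι → E} {μ : ι}
    (hμ : ∀ j, ‖a j‖ ≤ ‖a μ‖) {C r lam : ℝ} (hC : 0 < C) (hr : 0 < r)
    (h : (∃ j, a j ≠ 0) → ∃ j, ‖a j‖ ≥ C * r ^ (-lam)) :
    ‖a μ‖⁻¹ ≤ C⁻¹ * r ^ lam := by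
  obtain hμ0 | hμ0 := eq_or_ne (a μ) 0
  · rw [hμ0, norm_zero, inv_zero]
    positivity
  obtain ⟨j, hj⟩ := h ⟨μ, hμ0⟩
  calc ‖a μ‖⁻¹ ≤ (C * r ^ (-lam))⁻¹ := inv_anti₀ (by positivity) (hj.trans (hμ j))
    _ = C⁻¹ * r ^ lam := by rw [mul_inv, Real.rpow_neg hr.le, inv_inv]

theorem rpow_mul_one_add_rpow_neg_le {r lam : ℝ} (hr : 0 ≤ r) (hlam : 0 ≤ lam) (M : ℕ) :
    r ^ lam * (1 + r) ^ (-((M + ⌈lam⌉₊ : ℕ) : ℝ)) ≤ (1 + r) ^ (-(M : ℝ)) :=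
  calc r ^ lam * (1 + r) ^ (-((M + ⌈lam⌉₊ : ℕ) : ℝ))
      ≤ (1 + r) ^ lam * (1 + r) ^ (-((M + ⌈lam⌉₊ : ℕ) : ℝ)) := by
        gcongr
        linarith
    _ = (1 + r) ^ (lam - ⌈lam⌉₊ - M) := by
        rw [← Real.rpow_add (by positivity)]
        push_cast
        ring_nf
    _ ≤ (1 + r) ^ (-(M : ℝ)) := by
        gcongr
        · linarith
        · linarith [Nat.le_ceil lam]

theorem exists_rpow_bound_of_le_rpow_mul {E F G ι κ : Type*} [SeminormedAddCommGroup E]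
    [SeminormedAddCommGroup F] [SeminormedAddCommGroup G] [Fintype ι]
    {u : E → ι → F} {g : E → κ → G} {A lam : ℝ} (hA : 0 ≤ A) (hlam : 0 ≤ lam)
    (hg : ∀ M : ℕ, ∃ CM > 0, ∀ z K, ‖g z K‖ ≤ CM * (1 + ‖z‖) ^ (-(M : ℝ)))
    (hu : ∀ z ≠ 0, ∀ J, ∃ K, ‖u z J‖ ≤ A * ‖z‖ ^ lam * ‖g z K‖) (M : ℕ) :
    ∃ C' > 0, ∀ z J, ‖u z J‖ ≤ C' * (1 + ‖z‖) ^ (-(M : ℝ)) := by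
  obtain ⟨CM, hCM, hgM⟩ := hg (M + ⌈lam⌉₊)
  -- `∑ J, ‖u 0 J‖` covers the point `z = 0`, about which `hu` says nothing
  refine ⟨A * CM + (∑ J, ‖u 0 J‖ + 1), by positivity, fun z J => ?_⟩
  obtain rfl | hz := eq_or_ne z 0
  · rw [norm_zero, add_zero, Real.one_rpow, mul_one]
    linarith [single_le_sum (fun J _ => norm_nonneg (u 0 J)) (mem_univ J), mul_nonneg hA hCM.le]
  obtain ⟨K, hK⟩ := hu z hz J
  calc ‖u z J‖ ≤ A * ‖z‖ ^ lam * (CM * (1 + ‖z‖) ^ (-((M + ⌈lam⌉₊ : ℕ) : ℝ))) := by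
        grw [hK, hgM z K]
    _ = A * CM * (‖z‖ ^ lam * (1 + ‖z‖) ^ (-((M + ⌈lam⌉₊ : ℕ) : ℝ))) := by ring
    _ ≤ A * CM * (1 + ‖z‖) ^ (-(M : ℝ)) := by
        gcongr
        exact rpow_mul_one_add_rpow_neg_le (norm_nonneg z) hlam M
    _ ≤ (A * CM + (∑ J, ‖u 0 J‖ + 1)) * (1 + ‖z‖) ^ (-(M : ℝ)) := by
        gcongr
        exact le_add_of_nonneg_right (by positivity)

theorem stmt11_general (n N p : ℕ)
    (psym : Fin n → (Fin N → ℤ) → ℂ)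
    (hdioph : ∃ C > (0 : ℝ), ∃ lam > (0 : ℝ), ∀ (η : Fin n → ℤ) (ξ : Fin N → ℤ),
      (∃ j, ((η j : ℂ) + psym j ξ) ≠ 0) →
      ∃ j, ‖(η j : ℂ) + psym j ξ‖ ≥
        C * ‖((η, ξ) : (Fin n → ℤ) × (Fin N → ℤ))‖ ^ (-lam))
    (f : (Fin n → ℤ) → (Fin N → ℤ) → Finset (Fin n) → ℂ)
    (hfdec : ∀ M : ℕ, ∃ CM > (0 : ℝ), ∀ η ξ K, ‖f η ξ K‖ ≤
      CM * (1 + ‖((η, ξ) : (Fin n → ℤ) × (Fin N → ℤ))‖) ^ (-(M : ℝ)))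
    (Lhat : (Fin n → ℤ) → (Fin N → ℤ) → ExteriorAlgebra ℂ (Fin n → ℂ))
    (hLhat : ∀ η ξ, Lhat η ξ =
      ∑ j : Fin n, (Complex.I * ((η j : ℂ) + psym j ξ)) • dt n j)
    (Fhat : (Fin n → ℤ) → (Fin N → ℤ) → ExteriorAlgebra ℂ (Fin n → ℂ))
    (hFhat : ∀ η ξ, Fhat η ξ =
      ∑ K ∈ Finset.univ.filter (fun K : Finset (Fin n) => K.card = p + 1),
        f η ξ K • dtW n K)
    (hwedge : ∀ η ξ, Lhat η ξ * Fhat η ξ = 0)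
    (μsel : (Fin n → ℤ) → (Fin N → ℤ) → Fin n)
    (hμmax : ∀ η ξ j, ‖(η j : ℂ) + psym j ξ‖ ≤
      ‖(η (μsel η ξ) : ℂ) + psym (μsel η ξ) ξ‖)
    (ucoef : (Fin n → ℤ) → (Fin N → ℤ) → Finset (Fin n) → ℂ)
    (hucoef : ∀ η ξ J, ucoef η ξ J =
      if μsel η ξ ∈ J then 0 else
        Complex.I⁻¹ * (-1 : ℂ) ^ (J.filter (fun k => k < μsel η ξ)).card *
          ((η (μsel η ξ) : ℂ) + psym (μsel η ξ) ξ)⁻¹ *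
            f η ξ (insert (μsel η ξ) J)) :
    (∀ η ξ, Lhat η ξ ≠ 0 →
      Lhat η ξ *
        (∑ J ∈ Finset.univ.filter (fun J : Finset (Fin n) => J.card = p),
          ucoef η ξ J • dtW n J) = Fhat η ξ) ∧
    (∀ M : ℕ, ∃ C' > (0 : ℝ), ∀ η ξ, Lhat η ξ ≠ 0 → ∀ J,
      ‖ucoef η ξ J‖ ≤
        C' * (1 + ‖((η, ξ) : (Fin n → ℤ) × (Fin N → ℤ))‖) ^ (-(M : ℝ))) := by
  obtain ⟨C, hC, lam, hlam, hdioph⟩ := hdioph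
  simp only [hLhat, hFhat, sum_smul_dt] at hwedge ⊢
  constructor
  · intro η ξ hL
    have hμ : Complex.I * ((η (μsel η ξ) : ℂ) + psym (μsel η ξ) ξ) ≠ 0 :=
      apply_ne_zero_of_forall_norm_le (a := fun j => Complex.I * ((η j : ℂ) + psym j ξ))
        (fun j => by simpa only [norm_mul, Complex.norm_I, one_mul] using hμmax η ξ j)
        (fun h => hL (by rw [h, map_zero]))
    convert ι_mul_sum_dtW_eq_of_ι_mul_eq_zero hμ (hwedge η ξ) using 4 with J
    rw [hucoef, mul_inv]
    split_ifs <;> ring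
  · intro M
    have hu : ∀ η ξ J, ‖ucoef η ξ J‖ ≤
        ‖(η (μsel η ξ) : ℂ) + psym (μsel η ξ) ξ‖⁻¹ * ‖f η ξ (insert (μsel η ξ) J)‖ := by
      intro η ξ J
      rw [hucoef]
      split_ifs
      · rw [norm_zero]; positivity
      · simp
    have hinv : ∀ η ξ, ((η, ξ) : (Fin n → ℤ) × (Fin N → ℤ)) ≠ 0 →
        ‖(η (μsel η ξ) : ℂ) + psym (μsel η ξ) ξ‖⁻¹ ≤
          C⁻¹ * ‖((η, ξ) : (Fin n → ℤ) × (Fin N → ℤ))‖ ^ lam :=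
      fun η ξ hz => inv_norm_le_of_exists_norm_ge (hμmax η ξ) hC (norm_pos_iff.mpr hz) (hdioph η ξ)
    obtain ⟨C', hC', hbound⟩ := exists_rpow_bound_of_le_rpow_mul
      (u := fun z : (Fin n → ℤ) × (Fin N → ℤ) => ucoef z.1 z.2) (g := fun z => f z.1 z.2)
      (inv_nonneg.mpr hC.le) hlam.le
      (fun M => let ⟨CM, hCM, h⟩ := hfdec M; ⟨CM, hCM, fun z => h z.1 z.2⟩)
      (fun z hz J => ⟨_, (hu z.1 z.2 J).trans (by grw [hinv z.1 z.2 hz])⟩) M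
    exact ⟨C', hC', fun η ξ _ J => hbound (η, ξ) J⟩

/-- under the Diophantine lower bound on the symbol
`L̂(η,ξ) = i Σ_j (η_j + p_j(ξ)) dt_j`, given a rapidly decreasing family
`f̂(η,ξ)` of `(p+1)`-covectors with `L̂(η,ξ) ∧ f̂(η,ξ) = 0`, the explicitly
defined covectors `û(η,ξ)` (using an index `μ` attaining
`max_j |η_j + p_j(ξ)|`) satisfy `L̂(η,ξ) ∧ û(η,ξ) = f̂(η,ξ)` for all `(η,ξ)`
with `L̂(η,ξ) ≠ 0`, and the family `û` is rapidly decreasing there. -/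
theorem stmt11 (n N p : ℕ) (hn : 0 < n) (hp : p + 1 ≤ n)
    (psym : Fin n → (Fin N → ℤ) → ℂ) (msym : Fin n → ℝ)
    (hsym : ∃ C₀ > (0 : ℝ), ∀ (j : Fin n) (ξ : Fin N → ℤ),
      ‖psym j ξ‖ ≤ C₀ * (1 + ‖ξ‖) ^ (msym j))
    (hdioph : ∃ C > (0 : ℝ), ∃ lam > (0 : ℝ), ∀ (η : Fin n → ℤ) (ξ : Fin N → ℤ),
      (∃ j, ((η j : ℂ) + psym j ξ) ≠ 0) →
      ∃ j, ‖(η j : ℂ) + psym j ξ‖ ≥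
        C * ‖((η, ξ) : (Fin n → ℤ) × (Fin N → ℤ))‖ ^ (-lam))
    (f : (Fin n → ℤ) → (Fin N → ℤ) → Finset (Fin n) → ℂ)
    (hfdec : ∀ M : ℕ, ∃ CM > (0 : ℝ), ∀ η ξ K, ‖f η ξ K‖ ≤
      CM * (1 + ‖((η, ξ) : (Fin n → ℤ) × (Fin N → ℤ))‖) ^ (-(M : ℝ)))
    (Lhat : (Fin n → ℤ) → (Fin N → ℤ) → ExteriorAlgebra ℂ (Fin n → ℂ))
    (hLhat : ∀ η ξ, Lhat η ξ =
      ∑ j : Fin n, (Complex.I * ((η j : ℂ) + psym j ξ)) • dt n j)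
    (Fhat : (Fin n → ℤ) → (Fin N → ℤ) → ExteriorAlgebra ℂ (Fin n → ℂ))
    (hFhat : ∀ η ξ, Fhat η ξ =
      ∑ K ∈ Finset.univ.filter (fun K : Finset (Fin n) => K.card = p + 1),
        f η ξ K • dtW n K)
    (hwedge : ∀ η ξ, Lhat η ξ * Fhat η ξ = 0)
    (μsel : (Fin n → ℤ) → (Fin N → ℤ) → Fin n)
    (hμmax : ∀ η ξ j, ‖(η j : ℂ) + psym j ξ‖ ≤
      ‖(η (μsel η ξ) : ℂ) + psym (μsel η ξ) ξ‖)
    (ucoef : (Fin n → ℤ) → (Fin N → ℤ) → Finset (Fin n) → ℂ)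
    (hucoef : ∀ η ξ J, ucoef η ξ J =
      if μsel η ξ ∈ J then 0 else
        Complex.I⁻¹ * (-1 : ℂ) ^ (J.filter (fun k => k < μsel η ξ)).card *
          ((η (μsel η ξ) : ℂ) + psym (μsel η ξ) ξ)⁻¹ *
            f η ξ (insert (μsel η ξ) J)) :
    (∀ η ξ, Lhat η ξ ≠ 0 →
      Lhat η ξ *
        (∑ J ∈ Finset.univ.filter (fun J : Finset (Fin n) => J.card = p),
          ucoef η ξ J • dtW n J) = Fhat η ξ) ∧
    (∀ M : ℕ, ∃ C' > (0 : ℝ), ∀ η ξ, Lhat η ξ ≠ 0 → ∀ J,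
      ‖ucoef η ξ J‖ ≤
        C' * (1 + ‖((η, ξ) : (Fin n → ℤ) × (Fin N → ℤ))‖) ^ (-(M : ℝ))) :=
  stmt11_general n N p psym hdioph f hfdec Lhat hLhat Fhat hFhat hwedge μsel hμmax ucoef hucoef
end
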